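/- Let H(x,y) = y²/2 + x²/2 − x⁴/4 (the truncated pendulum Hamiltonian). Then x⁴ y dx = (8/7·x² − 4/7·H)·y dx − (6/7)·x y dH + d((2/7)·x y³) as polynomial 1-forms on ℝ². -/

import Mathlib

/-- partial derivative in the first variable -/
noncomputable def pdx (F : ℝ → ℝ → ℝ) (x y : ℝ) : ℝ := deriv (fun t => F t y) x

/-- partial derivative in the second variable -/
noncomputable def pdy (F : ℝ → ℝ → ℝ) (x y : ℝ) : ℝ := deriv (fun t => F x t) y

/-- truncated pendulum Hamiltonian -/
noncomputable def H (x y : ℝ) : ℝ := y^2/2 + x^2/2 - x^4/4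

theorem pdx_H (x y : ℝ) : pdx H x y = x - x ^ 3 := by
  have h : HasDerivAt (fun t => y ^ 2 / 2 + t ^ 2 / 2 - t ^ 4 / 4)
      (↑2 * x ^ 1 / 2 - ↑4 * x ^ 3 / 4) x :=
    (((hasDerivAt_pow 2 x).div_const 2).const_add _).sub ((hasDerivAt_pow 4 x).div_const 4)
  rw [pdx, show (fun t => H t y) = fun t => y ^ 2 / 2 + t ^ 2 / 2 - t ^ 4 / 4 from rfl, h.deriv]
  ring

theorem pdy_H (x y : ℝ) : pdy H x y = y := by
  have h : HasDerivAt (fun t => t ^ 2 / 2 + x ^ 2 / 2 - x ^ 4 / 4) (↑2 * y ^ 1 / 2) y :=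
    (((hasDerivAt_pow 2 y).div_const 2).add_const _).sub_const _
  rw [pdy, show (fun t => H x t) = fun t => t ^ 2 / 2 + x ^ 2 / 2 - x ^ 4 / 4 from rfl, h.deriv]
  ring

theorem pdx_const_mul_mul_pow (c : ℝ) (n : ℕ) (x y : ℝ) :
    pdx (fun x y => c * x * y ^ n) x y = c * y ^ n := by
  rw [pdx, (((hasDerivAt_id' x).const_mul c).mul_const (y ^ n)).deriv, mul_one]

theorem pdy_const_mul_mul_pow (c : ℝ) (n : ℕ) (x y : ℝ) :
    pdy (fun x y => c * x * y ^ n) x y = c * x * (n * y ^ (n - 1)) := by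
  rw [pdy, ((hasDerivAt_pow n y).const_mul (c * x)).deriv]

/-- (ii2):  x⁴y dx = (8/7·x² − 4/7·H)·y dx − (6/7)·xy·dH + d((2/7)·xy³) -/
theorem decomposition_ii2 : ∀ x y : ℝ,
    x^4 * y = (8/7 * x^2 - 4/7 * H x y) * y - 6/7 * (x*y) * pdx H x y
      + pdx (fun x y => 2/7 * x * y^3) x y
  ∧ (0 : ℝ) = - (6/7) * (x*y) * pdy H x y + pdy (fun x y => 2/7 * x * y^3) x y := by
  intro x y
  rw [pdx_H, pdy_H, pdx_const_mul_mul_pow, pdy_const_mul_mul_pow, H]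
  constructor <;> push_cast <;> ring
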